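/- Let V : ℝ → ℝ be a nonnegative absolutely continuous function with V'(t) ≤ μ for almost every t at which V(t) > 0, where μ < 0. Then V(t) = 0 for all t ≥ V(0)/(-μ), and in particular the hitting time t₀ = inf{t ≥ 0 : V(t) = 0} satisfies t₀ ≤ V(0)/(-μ). -/

import Mathlib

/-!
Where `V > 0` the integral representation forces `V` to decrease at rate at least `-μ`. If
`V t > 0`, let `c` be the last zero of `V` on `[0, t]`, or `c = 0` if there is none; `V` is
positive on `(c, t)`, so `V t ≤ V c + μ (t - c)`. With a zero this is negative; without one it
is `≤ V 0 + μ t ≤ 0` once `t ≥ V 0 / (-μ)`.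
-/

open MeasureTheory Set

theorem intervalIntegral.integral_le_mul_sub_of_ae_le {g : ℝ → ℝ} {a b c : ℝ} (hab : a ≤ b)
    (hg : IntervalIntegrable g volume a b) (h : ∀ᵐ s, s ∈ Ioo a b → g s ≤ c) :
    ∫ s in a..b, g s ≤ c * (b - a) := by
  have hle : ∫ s in a..b, g s ≤ ∫ _ in a..b, c := by
    refine intervalIntegral.integral_mono_ae_restrict hab hg intervalIntegrable_const ?_
    rw [Measure.restrict_congr_set Ioo_ae_eq_Icc.symm]
    exact (ae_restrict_iff' measurableSet_Ioo).2 h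
  simpa [mul_comm] using hle

theorem ContinuousOn.exists_last_zero {f : ℝ → ℝ} {a b : ℝ} (hf : ContinuousOn f (Icc a b))
    (h : ∃ s ∈ Icc a b, f s = 0) : ∃ c ∈ Icc a b, f c = 0 ∧ ∀ s ∈ Ioc c b, f s ≠ 0 := by
  have hcpt : IsCompact (Icc a b ∩ f ⁻¹' {0}) :=
    isCompact_Icc.of_isClosed_subset
      (hf.preimage_isClosed_of_isClosed isClosed_Icc isClosed_singleton) inter_subset_left
  obtain ⟨c, ⟨hc, hfc⟩, hmax⟩ := hcpt.exists_isGreatest (by simpa [Set.Nonempty] using h)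
  refine ⟨c, hc, hfc, fun s hs hfs => ?_⟩
  exact hs.1.not_ge (hmax ⟨⟨hc.1.trans hs.1.le, hs.2⟩, hfs⟩)

section IntegralRepresentation

variable {V g : ℝ → ℝ}

theorem continuousOn_Icc_of_eq_add_integral
    (hint : ∀ t : ℝ, 0 ≤ t → V t = V 0 + ∫ s in (0:ℝ)..t, g s)
    {b : ℝ} (hb : 0 ≤ b) (hgb : IntervalIntegrable g volume 0 b) :
    ContinuousOn V (Icc 0 b) := by
  have hprim : ContinuousOn (fun t => V 0 + ∫ s in (0:ℝ)..t, g s) (Icc 0 b) := by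
    have := intervalIntegral.continuousOn_primitive_interval' hgb left_mem_uIcc
    exact continuousOn_const.add (by rwa [uIcc_of_le hb] at this)
  exact hprim.congr fun t ht => hint t ht.1

theorem le_add_mul_sub_of_pos_on_Ioo {μ : ℝ}
    (hint : ∀ t : ℝ, 0 ≤ t → V t = V 0 + ∫ s in (0:ℝ)..t, g s)
    (hloc : ∀ t : ℝ, 0 ≤ t → IntervalIntegrable g volume 0 t)
    (hg : ∀ᵐ s : ℝ, 0 ≤ s → 0 < V s → g s ≤ μ)
    {a b : ℝ} (ha : 0 ≤ a) (hab : a ≤ b) (hpos : ∀ s ∈ Ioo a b, 0 < V s) :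
    V b ≤ V a + μ * (b - a) := by
  have hb : 0 ≤ b := ha.trans hab
  have hgab : IntervalIntegrable g volume a b :=
    (hloc a ha).symm.trans (hloc b hb)
  have hVab : V b - V a = ∫ s in a..b, g s := by
    rw [hint b hb, hint a ha, add_sub_add_left_eq_sub,
      intervalIntegral.integral_interval_sub_left (hloc b hb) (hloc a ha)]
  have hbound : ∫ s in a..b, g s ≤ μ * (b - a) := by
    refine intervalIntegral.integral_le_mul_sub_of_ae_le hab hgab ?_
    filter_upwards [hg] with s hs hmem
    exact hs (ha.trans hmem.1.le) (hpos s hmem)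
  linarith

theorem eq_zero_of_div_neg_le {μ : ℝ} (hμ : μ < 0)
    (hnn : ∀ t : ℝ, 0 ≤ t → 0 ≤ V t)
    (hint : ∀ t : ℝ, 0 ≤ t → V t = V 0 + ∫ s in (0:ℝ)..t, g s)
    (hloc : ∀ t : ℝ, 0 ≤ t → IntervalIntegrable g volume 0 t)
    (hg : ∀ᵐ s : ℝ, 0 ≤ s → 0 < V s → g s ≤ μ)
    {t : ℝ} (ht : V 0 / (-μ) ≤ t) : V t = 0 := by
  have ht0 : 0 ≤ t := (div_nonneg (hnn 0 le_rfl) (neg_nonneg.2 hμ.le)).trans ht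
  by_contra hVt
  have hVt_pos : 0 < V t := (hnn t ht0).lt_of_ne' hVt
  by_cases hzero : ∃ s ∈ Icc 0 t, V s = 0
  · obtain ⟨c, hc, hVc, hlast⟩ :=
      (continuousOn_Icc_of_eq_add_integral hint ht0 (hloc t ht0)).exists_last_zero hzero
    have hct : c < t := hc.2.lt_of_ne fun h => hVt (h ▸ hVc)
    have hpos : ∀ s ∈ Ioo c t, 0 < V s := fun s hs =>
      (hnn s (hc.1.trans hs.1.le)).lt_of_ne' (hlast s (Ioo_subset_Ioc_self hs))
    have hdecay := le_add_mul_sub_of_pos_on_Ioo hint hloc hg hc.1 hc.2 hpos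
    have : μ * (t - c) < 0 := mul_neg_of_neg_of_pos hμ (sub_pos.2 hct)
    linarith
  · push Not at hzero
    have hpos : ∀ s ∈ Ioo 0 t, 0 < V s := fun s hs =>
      (hnn s hs.1.le).lt_of_ne' (hzero s (Ioo_subset_Icc_self hs))
    have hdecay := le_add_mul_sub_of_pos_on_Ioo hint hloc hg le_rfl ht0 hpos
    have : V 0 ≤ -μ * t := (div_le_iff₀' (neg_pos.2 hμ)).1 ht
    linarith

end IntegralRepresentation

/-- Absolute continuity is encoded by the integral representation with density `g = V'` a.e. -/
theorem stmt1 (V g : ℝ → ℝ) (μ : ℝ) (hμ : μ < 0)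
    (hnn : ∀ t : ℝ, 0 ≤ t → 0 ≤ V t)
    (hint : ∀ t : ℝ, 0 ≤ t → V t = V 0 + ∫ s in (0:ℝ)..t, g s)
    (hloc : ∀ t : ℝ, 0 ≤ t → IntervalIntegrable g MeasureTheory.volume 0 t)
    (hg : ∀ᵐ s : ℝ, 0 ≤ s → 0 < V s → g s ≤ μ) :
    (∀ t : ℝ, V 0 / (-μ) ≤ t → V t = 0) ∧
      sInf {t : ℝ | 0 ≤ t ∧ V t = 0} ≤ V 0 / (-μ) := by
  have hvanish : ∀ t, V 0 / (-μ) ≤ t → V t = 0 := fun t ht =>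
    eq_zero_of_div_neg_le hμ hnn hint hloc hg ht
  have hT0 : 0 ≤ V 0 / (-μ) := div_nonneg (hnn 0 le_rfl) (neg_nonneg.2 hμ.le)
  exact ⟨hvanish, csInf_le ⟨0, fun _ hs => hs.1⟩ ⟨hT0, hvanish _ le_rfl⟩⟩
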